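/- arXiv:0810.4240 — 3 statements merged into one kernel-verified Lean document; each statement's English description precedes it below -/
import Mathlib

section
/- Let A and B be sets and let h : A × B → ℂ satisfy sup_{a∈A}|h(a,b)| < ∞ for each fixed b ∈ B and sup_{b∈B}|h(a,b)| < ∞ for each fixed a ∈ A. Define d_A(a₁,a₂) := sup_{b∈B}|h(a₁,b) − h(a₂,b)| and d_B(b₁,b₂) := sup_{a∈A}|h(a,b₁) − h(a,b₂)|. Then (A,d_A) and (B,d_B) are semimetric spaces, and (A,d_A) is totally bounded if and only if (B,d_B) is totally bounded. -/
/-!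
The three semimetric axioms hold pointwise in `b` and pass to the supremum. For total
boundedness, an `ε/3`-net `F` of `A` turns `B` into the bounded set `{(h a b)_{a ∈ F} | b ∈ B}`
of the proper space `ℂ^F`, which is therefore totally bounded; an `ε/3`-net of it pulled back
to `B` is an `ε`-net for `d_B` by the triangle inequality through a nearby `a' ∈ F`.
The converse is the same argument applied to `flip h`.
-/

open Set Metric

section SupDist

variable {A B E : Type*} [SeminormedAddCommGroup E]

noncomputable def supDist (h : A → B → E) (a₁ a₂ : A) : ℝ :=
  ⨆ b, ‖h a₁ b - h a₂ b‖

def IsTotallyBoundedFor (d : A → A → ℝ) : Prop :=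
  ∀ ε : ℝ, 0 < ε → ∃ F : Finset A, ∀ a, ∃ a' ∈ F, d a a' ≤ ε

variable {h : A → B → E}

theorem supDist_self (a : A) : supDist h a a = 0 := by
  simp [supDist]

theorem supDist_nonneg (a₁ a₂ : A) : 0 ≤ supDist h a₁ a₂ :=
  Real.iSup_nonneg fun _ => norm_nonneg _

theorem supDist_comm (a₁ a₂ : A) : supDist h a₁ a₂ = supDist h a₂ a₁ := by
  simp only [supDist, norm_sub_rev]

theorem supDist_le_of_forall_dist_le {a₁ a₂ : A} {c : ℝ} (hc : 0 ≤ c)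
    (H : ∀ b, dist (h a₁ b) (h a₂ b) ≤ c) : supDist h a₁ a₂ ≤ c :=
  Real.iSup_le (fun b => dist_eq_norm (h a₁ b) (h a₂ b) ▸ H b) hc

theorem dist_le_supDist (hrow : ∀ a, ∃ M, ∀ b, ‖h a b‖ ≤ M) (a₁ a₂ : A) (b : B) :
    dist (h a₁ b) (h a₂ b) ≤ supDist h a₁ a₂ := by
  obtain ⟨M₁, hM₁⟩ := hrow a₁
  obtain ⟨M₂, hM₂⟩ := hrow a₂
  rw [dist_eq_norm]
  refine le_ciSup (f := fun b => ‖h a₁ b - h a₂ b‖) ⟨M₁ + M₂, ?_⟩ b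
  rintro _ ⟨b, rfl⟩
  exact (norm_sub_le _ _).trans (add_le_add (hM₁ b) (hM₂ b))

theorem supDist_triangle (hrow : ∀ a, ∃ M, ∀ b, ‖h a b‖ ≤ M) (a₁ a₂ a₃ : A) :
    supDist h a₁ a₃ ≤ supDist h a₁ a₂ + supDist h a₂ a₃ :=
  supDist_le_of_forall_dist_le (add_nonneg (supDist_nonneg _ _) (supDist_nonneg _ _)) fun b =>
    (dist_triangle _ (h a₂ b) _).trans
      (add_le_add (dist_le_supDist hrow a₁ a₂ b) (dist_le_supDist hrow a₂ a₃ b))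

end SupDist

theorem exists_finset_forall_exists_dist_lt {B X : Type*} [PseudoMetricSpace X] {φ : B → X}
    (hφ : TotallyBounded (range φ)) {ε : ℝ} (hε : 0 < ε) :
    ∃ G : Finset B, ∀ b, ∃ b' ∈ G, dist (φ b) (φ b') < ε := by
  classical
  obtain ⟨t, htφ, ht, hcover⟩ := finite_approx_of_totallyBounded hφ ε hε
  obtain ⟨G, -, hGt⟩ := Finset.subset_set_image_iff.mp
    (ht.coe_toFinset.trans_subset (htφ.trans image_univ.symm.subset))
  refine ⟨G, fun b => ?_⟩
  obtain ⟨_, hy, hb⟩ := mem_iUnion₂.mp (hcover (mem_range_self b))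
  obtain ⟨b', hb', rfl⟩ := Finset.mem_image.mp (hGt ▸ ht.mem_toFinset.mpr hy)
  exact ⟨b', hb', hb⟩

theorem isTotallyBoundedFor_supDist_flip {A B E : Type*} [SeminormedAddCommGroup E]
    [ProperSpace E] {h : A → B → E} (hrow : ∀ a, ∃ M, ∀ b, ‖h a b‖ ≤ M)
    (hA : IsTotallyBoundedFor (supDist h)) : IsTotallyBoundedFor (supDist (flip h)) := by
  intro ε hε
  obtain ⟨F, hF⟩ := hA (ε / 3) (by positivity)
  let φ : B → F → E := fun b a => h a b
  have hφ : Bornology.IsBounded (range φ) := by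
    refine Bornology.forall_isBounded_image_eval_iff.mp fun a => ?_
    obtain ⟨M, hM⟩ := hrow a
    rw [← range_comp]
    exact isBounded_iff_forall_norm_le.mpr ⟨M, forall_mem_range.mpr hM⟩
  obtain ⟨G, hG⟩ := exists_finset_forall_exists_dist_lt
    (hφ.isCompact_closure.totallyBounded.subset subset_closure) (show 0 < ε / 3 by positivity)
  refine ⟨G, fun b => ?_⟩
  obtain ⟨b', hb', hbb'⟩ := hG b
  refine ⟨b', hb', supDist_le_of_forall_dist_le hε.le fun a => ?_⟩
  obtain ⟨a', ha', haa'⟩ := hF a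
  calc dist (h a b) (h a b')
      ≤ dist (h a b) (h a' b) + dist (h a' b) (h a' b') + dist (h a' b') (h a b') :=
        dist_triangle4 _ _ _ _
    _ ≤ ε / 3 + ε / 3 + ε / 3 := by
        gcongr
        · exact (dist_le_supDist hrow a a' b).trans haa'
        · exact (dist_le_pi_dist (φ b) (φ b') ⟨a', ha'⟩).trans hbb'.le
        · rw [dist_comm]; exact (dist_le_supDist hrow a a' b').trans haa'
    _ = ε := by ring

/-- Let `A` and `B` be sets and `h : A × B → ℂ` be bounded in each
variable separately.  Define `d_A(a₁,a₂) := sup_{b∈B} |h(a₁,b) − h(a₂,b)|` and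
`d_B(b₁,b₂) := sup_{a∈A} |h(a,b₁) − h(a,b₂)|`.  Then `(A, d_A)` and `(B, d_B)` are
semimetric spaces, and `(A, d_A)` is totally bounded iff `(B, d_B)` is totally bounded. -/
theorem statement0 {A B : Type*} (h : A → B → ℂ)
    (hcol : ∀ b : B, ∃ M : ℝ, ∀ a : A, ‖h a b‖ ≤ M)
    (hrow : ∀ a : A, ∃ M : ℝ, ∀ b : B, ‖h a b‖ ≤ M)
    (dA : A → A → ℝ) (dB : B → B → ℝ)
    (hdA : ∀ a₁ a₂ : A, dA a₁ a₂ = ⨆ b : B, ‖h a₁ b - h a₂ b‖)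
    (hdB : ∀ b₁ b₂ : B, dB b₁ b₂ = ⨆ a : A, ‖h a b₁ - h a b₂‖) :
    -- `(A, d_A)` is a semimetric space
    ((∀ a : A, dA a a = 0) ∧ (∀ a₁ a₂ : A, 0 ≤ dA a₁ a₂) ∧
      (∀ a₁ a₂ : A, dA a₁ a₂ = dA a₂ a₁) ∧
      (∀ a₁ a₂ a₃ : A, dA a₁ a₃ ≤ dA a₁ a₂ + dA a₂ a₃)) ∧
    -- `(B, d_B)` is a semimetric space
    ((∀ b : B, dB b b = 0) ∧ (∀ b₁ b₂ : B, 0 ≤ dB b₁ b₂) ∧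
      (∀ b₁ b₂ : B, dB b₁ b₂ = dB b₂ b₁) ∧
      (∀ b₁ b₂ b₃ : B, dB b₁ b₃ ≤ dB b₁ b₂ + dB b₂ b₃)) ∧
    -- `(A, d_A)` is totally bounded iff `(B, d_B)` is totally bounded
    ((∀ ε : ℝ, 0 < ε → ∃ F : Finset A, ∀ a : A, ∃ a' ∈ F, dA a a' ≤ ε) ↔
      (∀ ε : ℝ, 0 < ε → ∃ F : Finset B, ∀ b : B, ∃ b' ∈ F, dB b b' ≤ ε)) := by
  obtain rfl : dA = supDist h := funext₂ hdA
  obtain rfl : dB = supDist (flip h) := funext₂ hdB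
  exact ⟨⟨supDist_self, supDist_nonneg, supDist_comm, supDist_triangle hrow⟩,
    ⟨supDist_self, supDist_nonneg, supDist_comm, supDist_triangle hcol⟩,
    isTotallyBoundedFor_supDist_flip hrow, isTotallyBoundedFor_supDist_flip (h := flip h) hcol⟩
end

section
/- Let A and B be sets and let h : A × B → ℂ satisfy sup_{a∈A}|h(a,b)| < ∞ for each fixed b ∈ B and sup_{b∈B}|h(a,b)| < ∞ for each fixed a ∈ A, and define the semimetrics d_A(a₁,a₂) := sup_{b∈B}|h(a₁,b) − h(a₂,b)| on A and d_B(b₁,b₂) := sup_{a∈A}|h(a,b₁) − h(a,b₂)| on B. If the intrinsic covering number N_A(ε) is finite for some ε > 0, then the diameter covering number N_B^Δ(ρ) is finite for every ρ > ε. -/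
/-- The intrinsic covering number `N_S(ε)` of a subset `S` of a semimetric space
`(E, d)`: the least cardinality of a finite set `F ⊆ S` such that every point of `S`
is within distance `ε` of some point of `F`; `∞` if no such finite set exists. -/
noncomputable def icov {E : Type*} (d : E → E → ℝ) (S : Set E) (ε : ℝ) : ℕ∞ :=
  sInf ((fun F : Finset E => (F.card : ℕ∞)) ''
    {F : Finset E | ↑F ⊆ S ∧ ∀ x ∈ S, ∃ y ∈ F, d x y ≤ ε})

/-- The diameter covering number `N_S^Δ(ε)`: the least number of subsets, each of
diameter at most `2ε`, needed to cover `S`; `∞` if no finite such cover exists. -/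
noncomputable def dcov {E : Type*} (d : E → E → ℝ) (S : Set E) (ε : ℝ) : ℕ∞ :=
  sInf ((fun k : ℕ => (k : ℕ∞)) ''
    {k : ℕ | ∃ G : Fin k → Set E,
      (∀ i, ∀ x ∈ G i, ∀ y ∈ G i, d x y ≤ 2 * ε) ∧ S ⊆ ⋃ i, G i})

/-!
Fix a finite `ε`-net `F` of `A` and send `b ∈ B` to its column `(h a' b)_{a' ∈ F}` in the
finite-dimensional space `F → ℂ`. Rows are bounded, so the image is bounded, hence totally
bounded, and `B` is covered by finitely many fibres of balls of radius `ρ - ε`. Within one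
fibre the columns differ by less than `2(ρ - ε)` on the net, and moving from an arbitrary
`a` to its neighbour in the net costs at most `ε` on each side, so the `d_B`-diameter of a
fibre is at most `2ε + 2(ρ - ε) = 2ρ`.
-/

open Set Bornology

theorem exists_finset_net_of_icov_ne_top {E : Type*} {d : E → E → ℝ} {S : Set E} {ε : ℝ}
    (hS : icov d S ε ≠ ⊤) : ∃ F : Finset E, ↑F ⊆ S ∧ ∀ x ∈ S, ∃ y ∈ F, d x y ≤ ε := by
  by_contra hF
  have hnone : {F : Finset E | ↑F ⊆ S ∧ ∀ x ∈ S, ∃ y ∈ F, d x y ≤ ε} = ∅ :=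
    eq_empty_iff_forall_notMem.2 fun F hF' => hF ⟨F, hF'⟩
  exact hS (by rw [icov, hnone, image_empty, sInf_empty])

theorem dcov_ne_top_of_finite_cover {E ι : Type*} [Finite ι] {d : E → E → ℝ} {S : Set E}
    {ρ : ℝ} (G : ι → Set E) (hG : ∀ i, ∀ x ∈ G i, ∀ y ∈ G i, d x y ≤ 2 * ρ)
    (hS : S ⊆ ⋃ i, G i) : dcov d S ρ ≠ ⊤ := by
  obtain ⟨n, ⟨e⟩⟩ := Finite.exists_equiv_fin ι
  have hn : (n : ℕ∞) ∈ (fun k : ℕ => (k : ℕ∞)) ''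
      {k : ℕ | ∃ G : Fin k → Set E,
        (∀ i, ∀ x ∈ G i, ∀ y ∈ G i, d x y ≤ 2 * ρ) ∧ S ⊆ ⋃ i, G i} := by
    refine ⟨n, ⟨G ∘ e.symm, fun i => hG _, hS.trans ?_⟩, rfl⟩
    exact iUnion_subset fun i => subset_iUnion_of_subset (e i) (by simp)
  exact ne_top_of_le_ne_top (ENat.natCast_ne_top n) (sInf_le hn)

theorem Bornology.IsBounded.totallyBounded {X : Type*} [PseudoMetricSpace X] [ProperSpace X]
    {s : Set X} (hs : IsBounded s) : TotallyBounded s :=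
  hs.isCompact_closure.totallyBounded.subset subset_closure

theorem norm_sub_le_iSup_norm_sub {B E : Type*} [SeminormedAddCommGroup E] {f g : B → E}
    (hf : ∃ M, ∀ b, ‖f b‖ ≤ M) (hg : ∃ M, ∀ b, ‖g b‖ ≤ M) (b : B) :
    ‖f b - g b‖ ≤ ⨆ b, ‖f b - g b‖ := by
  obtain ⟨M, hM⟩ := hf
  obtain ⟨N, hN⟩ := hg
  refine le_ciSup (f := fun b => ‖f b - g b‖) ⟨M + N, ?_⟩ b
  rintro _ ⟨b', rfl⟩
  exact (norm_sub_le _ _).trans (add_le_add (hM b') (hN b'))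

theorem iSup_norm_sub_le_of_net {A B E : Type*} [SeminormedAddCommGroup E] (h : A → B → E)
    (F : Set A) {ε η : ℝ} (hε : 0 ≤ ε) (hη : 0 ≤ η)
    (hF : ∀ a, ∃ a' ∈ F, ∀ b, ‖h a b - h a' b‖ ≤ ε) {b₁ b₂ : B}
    (hb : ∀ a' ∈ F, ‖h a' b₁ - h a' b₂‖ ≤ η) :
    ⨆ a, ‖h a b₁ - h a b₂‖ ≤ 2 * ε + η := by
  refine Real.iSup_le (fun a => ?_) (by positivity)
  obtain ⟨a', ha'F, ha'⟩ := hF a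
  calc ‖h a b₁ - h a b₂‖
      ≤ ‖h a b₁ - h a' b₁‖ + ‖h a' b₁ - h a' b₂‖ + ‖h a' b₂ - h a b₂‖ := by
        simpa only [dist_eq_norm] using dist_triangle4 (h a b₁) (h a' b₁) (h a' b₂) (h a b₂)
    _ ≤ ε + η + ε := by
        gcongr
        · exact ha' b₁
        · exact hb a' ha'F
        · rw [norm_sub_rev]; exact ha' b₂
    _ = 2 * ε + η := by ring

theorem statement2_general {A B : Type*} (h : A → B → ℂ)
    (hrow : ∀ a : A, ∃ M : ℝ, ∀ b : B, ‖h a b‖ ≤ M)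
    (dA : A → A → ℝ) (dB : B → B → ℝ)
    (hdA : ∀ a₁ a₂ : A, dA a₁ a₂ = ⨆ b : B, ‖h a₁ b - h a₂ b‖)
    (hdB : ∀ b₁ b₂ : B, dB b₁ b₂ = ⨆ a : A, ‖h a b₁ - h a b₂‖)
    (ε : ℝ) (hε : 0 < ε)
    (hfin : icov dA Set.univ ε ≠ ⊤) :
    ∀ ρ : ℝ, ε < ρ → dcov dB Set.univ ρ ≠ ⊤ := by
  intro ρ hρ
  obtain ⟨F, -, hF⟩ := exists_finset_net_of_icov_ne_top hfin
  have hnet : ∀ a, ∃ a' ∈ (F : Set A), ∀ b, ‖h a b - h a' b‖ ≤ ε := fun a => by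
    obtain ⟨a', ha'F, ha'⟩ := hF a (mem_univ a)
    exact ⟨a', ha'F, fun b => (norm_sub_le_iSup_norm_sub (hrow a) (hrow a') b).trans
      (hdA a a' ▸ ha')⟩
  set column : B → F → ℂ := fun b a' => h a' b
  have hbounded : IsBounded (range column) := forall_isBounded_image_eval_iff.1 fun a' => by
    obtain ⟨M, hM⟩ := hrow a'
    rw [← range_comp]
    exact isBounded_iff_forall_norm_le.2 ⟨M, by rintro _ ⟨b, rfl⟩; exact hM b⟩
  obtain ⟨t, ht, hcover⟩ := Metric.totallyBounded_iff.1 hbounded.totallyBounded (ρ - ε)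
    (by linarith)
  have : Finite t := ht
  refine dcov_ne_top_of_finite_cover (fun y : t => column ⁻¹' Metric.ball y (ρ - ε)) ?_ ?_
  · intro y b₁ hb₁ b₂ hb₂
    rw [hdB]
    refine (iSup_norm_sub_le_of_net h F (η := 2 * (ρ - ε)) hε.le (by linarith) hnet
      fun a' ha' => ?_).trans_eq (by ring)
    have hclose : dist (column b₁) (column b₂) < ρ - ε + (ρ - ε) :=
      (dist_triangle_right _ _ _).trans_lt (add_lt_add hb₁ hb₂)
    rw [← dist_eq_norm]
    exact (dist_le_pi_dist (column b₁) (column b₂) ⟨a', ha'⟩).trans (by linarith)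
  · intro b _
    obtain ⟨y, hy, hby⟩ := mem_iUnion₂.1 (hcover ⟨b, rfl⟩)
    exact mem_iUnion.2 ⟨⟨y, hy⟩, hby⟩

/-- Let `h : A × B → ℂ` be bounded in each variable separately, with the
semimetrics `d_A(a₁,a₂) := sup_{b∈B} |h(a₁,b) − h(a₂,b)|` on `A` and
`d_B(b₁,b₂) := sup_{a∈A} |h(a,b₁) − h(a,b₂)|` on `B`.  If the intrinsic covering number
`N_A(ε)` is finite for some `ε > 0`, then the diameter covering number `N_B^Δ(ρ)` is
finite for every `ρ > ε`. -/
theorem statement2 {A B : Type*} (h : A → B → ℂ)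
    (hcol : ∀ b : B, ∃ M : ℝ, ∀ a : A, ‖h a b‖ ≤ M)
    (hrow : ∀ a : A, ∃ M : ℝ, ∀ b : B, ‖h a b‖ ≤ M)
    (dA : A → A → ℝ) (dB : B → B → ℝ)
    (hdA : ∀ a₁ a₂ : A, dA a₁ a₂ = ⨆ b : B, ‖h a₁ b - h a₂ b‖)
    (hdB : ∀ b₁ b₂ : B, dB b₁ b₂ = ⨆ a : A, ‖h a b₁ - h a b₂‖)
    (ε : ℝ) (hε : 0 < ε)
    (hfin : icov dA Set.univ ε ≠ ⊤) :
    ∀ ρ : ℝ, ε < ρ → dcov dB Set.univ ρ ≠ ⊤ :=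
  statement2_general h hrow dA dB hdA hdB ε hε hfin
end

section
/- Let V be a real vector space, let p be a seminorm on V, and let A ⊆ V be an absolutely convex subset. Let B be a set and h : A × B → ℝ a real-valued function such that h(0,b) = 0 for all b ∈ B, such that sup_{a∈A}|h(a,b)| < ∞ for each b ∈ B and sup_{b∈B}|h(a,b)| < ∞ for each a ∈ A, and such that the semimetric d_A(a,a') := sup_{b∈B}|h(a,b) − h(a',b)| satisfies d_A(a,a') = p(a − a') for all a, a' ∈ A. Define the semimetric d_B(b₁,b₂) := sup_{a∈A}|h(a,b₁) − h(a,b₂)| on B. If the intrinsic covering number N_A(ε) is finite for some ε > 0, then for every δ > 0, N_B^Δ(ε + δ) ≤ (⌈ε·N_A(ε)/δ⌉)^{N_A(ε)}. -/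
/-!
The seminorm is at most `ε n` on `A`: for `a ∈ A`, the `n + 1` equally spaced points of the
segment `[-a, a] ⊆ A` are pairwise at least `2 p(a) / n` apart, while two of them share a nearest
point of an `ε`-net of size `n`, so `2 p(a) / n ≤ 2ε`. As `h(0, ·) = 0` and `a ↦ h(a, ·)` is
`p`-Lipschitz, `|h(y, b)| ≤ ε n` for `y` in the net `F`. Cut `[-ε n, ε n]` into
`m = ⌈ε n / δ⌉` intervals of length `2δ` and group the `b ∈ B` by the interval containing each
`h(y, b)`, `y ∈ F`: this gives `m ^ n` groups, and inside a group
`|h(a, b₁) - h(a, b₂)| ≤ ε + 2δ + ε`, by passing through the point of `F` nearest to `a`.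
-/

lemma exists_finset_card_eq_of_icov_eq {E : Type*} {d : E → E → ℝ} {S : Set E} {ε : ℝ} {n : ℕ}
    (hn : icov d S ε = n) :
    ∃ F : Finset E, ↑F ⊆ S ∧ (∀ x ∈ S, ∃ y ∈ F, d x y ≤ ε) ∧ F.card = n := by
  unfold icov at hn
  obtain ⟨F, ⟨hFS, hFcov⟩, hcard⟩ :=
    hn ▸ csInf_mem (Set.nonempty_iff_ne_empty.2 fun hempty => by simp [hempty] at hn)
  exact ⟨F, hFS, hFcov, Nat.cast_injective hcard⟩

lemma dcov_le_card {E ι : Type*} [Fintype ι] {d : E → E → ℝ} {S : Set E} {ε : ℝ}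
    (G : ι → Set E) (hG : ∀ i, ∀ x ∈ G i, ∀ y ∈ G i, d x y ≤ 2 * ε) (hS : S ⊆ ⋃ i, G i) :
    dcov d S ε ≤ Fintype.card ι := by
  let e := Fintype.equivFin ι
  refine sInf_le ⟨_, ⟨G ∘ e.symm, fun i => hG _, ?_⟩, rfl⟩
  rwa [Function.comp_def, e.symm.surjective.iUnion_comp G]

lemma exists_fin_le_le {m : ℕ} (hm : 0 < m) {s : ℝ} (hs0 : 0 ≤ s) (hs : s ≤ m) :
    ∃ k : Fin m, (k : ℝ) ≤ s ∧ s ≤ k + 1 := by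
  rcases hs.lt_or_eq with hlt | rfl
  · exact ⟨⟨⌊s⌋₊, (Nat.floor_lt hs0).2 hlt⟩, Nat.floor_le hs0, (Nat.lt_floor_add_one s).le⟩
  · exact ⟨⟨m - 1, by omega⟩, by simp [Nat.cast_sub hm], by simp [Nat.cast_sub hm]⟩

lemma dcov_univ_le_pow {B ι : Type*} [Fintype ι] (d : B → B → ℝ) (f : ι → B → ℝ)
    {δ η : ℝ} (hδ : 0 < δ) {m : ℕ} (hm : 0 < m) (hf : ∀ i b, |f i b| ≤ δ * m)
    (hd : ∀ b₁ b₂, (∀ i, |f i b₁ - f i b₂| ≤ 2 * δ) → d b₁ b₂ ≤ 2 * η) :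
    dcov d Set.univ η ≤ (m : ℕ∞) ^ Fintype.card ι := by
  classical
  let center : Fin m → ℝ := fun k => δ * (2 * k + 1 - m)
  have hcover : ∀ b i, ∃ k : Fin m, |f i b - center k| ≤ δ := fun b i => by
    have h2δ : 0 < 2 * δ := by positivity
    obtain ⟨hlo, hhi⟩ := abs_le.1 (hf i b)
    obtain ⟨k, hk, hk'⟩ := exists_fin_le_le hm (s := (f i b + δ * m) / (2 * δ))
      (div_nonneg (by linarith) h2δ.le) (by rw [div_le_iff₀ h2δ]; linarith)
    rw [le_div_iff₀ h2δ] at hk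
    rw [div_le_iff₀ h2δ] at hk'
    exact ⟨k, abs_le.2 ⟨by linarith, by linarith⟩⟩
  have hcard := dcov_le_card (d := d) (S := Set.univ) (ε := η)
    (fun c : ι → Fin m => {b | ∀ i, |f i b - center (c i)| ≤ δ})
    (fun c b₁ hb₁ b₂ hb₂ => hd b₁ b₂ fun i => by
      linarith [abs_sub_le (f i b₁) (center (c i)) (f i b₂), abs_sub_comm (f i b₂) (center (c i)),
        hb₁ i, hb₂ i])
    (fun b _ => Set.mem_iUnion.2 ⟨fun i => (hcover b i).choose, fun i => (hcover b i).choose_spec⟩)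
  simpa [Fintype.card_fun] using hcard

lemma Seminorm.exists_ne_sub_le_of_card_lt {𝕜 V ι : Type*} [SeminormedRing 𝕜] [AddCommGroup V]
    [SMul 𝕜 V] [Fintype ι] (p : Seminorm 𝕜 V) {F : Finset V} (hcard : F.card < Fintype.card ι)
    {x : ι → V} {ε : ℝ} (hx : ∀ j, ∃ y ∈ F, p (x j - y) ≤ ε) :
    ∃ j k, j ≠ k ∧ p (x j - x k) ≤ 2 * ε := by
  choose y hyF hy using hx
  obtain ⟨j, k, hjk, hyjk⟩ :=
    Fintype.exists_ne_map_eq_of_card_lt (fun j => (⟨y j, hyF j⟩ : F)) (by simpa using hcard)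
  have hyeq : y j = y k := congrArg Subtype.val hyjk
  refine ⟨j, k, hjk, ?_⟩
  calc p (x j - x k) = p ((x j - y j) - (x k - y k)) := by rw [hyeq, sub_sub_sub_cancel_right]
    _ ≤ p (x j - y j) + p (x k - y k) := map_sub_le_add p _ _
    _ ≤ 2 * ε := by linarith [hy j, hy k]

lemma one_le_abs_sub_of_ne {n : ℕ} {j k : Fin n} (hjk : j ≠ k) : (1 : ℝ) ≤ |(j : ℝ) - k| := by
  have hne : ((j : ℕ) : ℤ) - k ≠ 0 := sub_ne_zero.2 (by exact_mod_cast Fin.val_ne_of_ne hjk)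
  exact_mod_cast Int.one_le_abs hne

lemma Seminorm.le_mul_card_of_forall_exists_sub_le {V : Type*} [AddCommGroup V] [Module ℝ V]
    (p : Seminorm ℝ V) {A : Set V} (hA : Balanced ℝ A) {F : Finset V} {ε : ℝ}
    (hF : ∀ x ∈ A, ∃ y ∈ F, p (x - y) ≤ ε) {a : V} (ha : a ∈ A) : p a ≤ ε * F.card := by
  set n := F.card
  have hn : (0 : ℝ) < n := by
    obtain ⟨y, hy, -⟩ := hF a ha
    exact_mod_cast Finset.card_pos.2 ⟨y, hy⟩
  let t : Fin (n + 1) → ℝ := fun j => 2 * j / n - 1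
  have ht : ∀ j, ‖t j‖ ≤ 1 := fun j => by
    have hj : (j : ℝ) ≤ n := by exact_mod_cast Nat.lt_succ_iff.1 j.isLt
    rw [Real.norm_eq_abs, abs_le]
    constructor
    · have : 0 ≤ 2 * (j : ℝ) / n := by positivity
      linarith
    · have : 2 * (j : ℝ) / n ≤ 2 := by rw [div_le_iff₀ hn]; linarith
      linarith
  obtain ⟨j, k, hjk, hle⟩ := p.exists_ne_sub_le_of_card_lt (x := fun j => t j • a) (by simp [n])
    fun j => hF _ (hA.smul_mem (ht j) ha)
  have hgap : 2 / n ≤ |t j - t k| := by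
    have : t j - t k = 2 * ((j : ℝ) - k) / n := by simp only [t]; ring
    rw [this, abs_div, abs_mul, abs_two, abs_of_pos hn]
    gcongr
    linarith [one_le_abs_sub_of_ne hjk]
  have : 2 / n * p a ≤ 2 * ε :=
    calc 2 / n * p a ≤ |t j - t k| * p a := by gcongr
      _ = p (t j • a - t k • a) := by rw [← sub_smul, map_smul_eq_mul, Real.norm_eq_abs]
      _ ≤ 2 * ε := hle
  rw [div_mul_eq_mul_div, div_le_iff₀ hn] at this
  linarith

lemma abs_sub_le_iSup_abs_sub {B : Type*} {f g : B → ℝ} (hf : ∃ M, ∀ b, |f b| ≤ M)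
    (hg : ∃ M, ∀ b, |g b| ≤ M) (b : B) : |f b - g b| ≤ ⨆ b, |f b - g b| := by
  obtain ⟨M, hM⟩ := hf
  obtain ⟨M', hM'⟩ := hg
  refine le_ciSup (f := fun b => |f b - g b|) ⟨M + M', ?_⟩ b
  rintro _ ⟨b', rfl⟩
  exact (abs_sub _ _).trans (add_le_add (hM b') (hM' b'))

lemma iSup_abs_sub_le_of_forall_exists {α B : Type*} {A F : Set α} (h : α → B → ℝ) {ε η : ℝ}
    (hε : 0 ≤ ε) (hη : 0 ≤ η) (hF : ∀ a ∈ A, ∃ y ∈ F, ∀ b, |h a b - h y b| ≤ ε) {b₁ b₂ : B}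
    (hb : ∀ y ∈ F, |h y b₁ - h y b₂| ≤ η) : ⨆ a : A, |h a b₁ - h a b₂| ≤ 2 * ε + η := by
  refine Real.iSup_le (fun a => ?_) (by positivity)
  obtain ⟨y, hy, hay⟩ := hF a a.2
  linarith [abs_sub_le (h a b₁) (h y b₁) (h a b₂), abs_sub_le (h y b₁) (h y b₂) (h a b₂),
    abs_sub_comm (h y b₂) (h a b₂), hay b₁, hay b₂, hb y hy]

theorem statement10_general {V : Type*} [AddCommGroup V] [Module ℝ V]
    (p : Seminorm ℝ V) (A : Set V)
    (habsconv : ∀ a ∈ A, ∀ a' ∈ A, ∀ lam mu : ℝ, |lam| + |mu| ≤ 1 →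
      lam • a + mu • a' ∈ A)
    {B : Type*} (h : V → B → ℝ)
    (h0 : ∀ b : B, h 0 b = 0)
    (hrow : ∀ a ∈ A, ∃ M : ℝ, ∀ b : B, |h a b| ≤ M)
    (dA : V → V → ℝ)
    (hdA : ∀ a ∈ A, ∀ a' ∈ A, dA a a' = ⨆ b : B, |h a b - h a' b|)
    (hdp : ∀ a ∈ A, ∀ a' ∈ A, dA a a' = p (a - a'))
    (dB : B → B → ℝ)
    (hdB : ∀ b₁ b₂ : B, dB b₁ b₂ = ⨆ a : A, |h (a : V) b₁ - h (a : V) b₂|)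
    (ε : ℝ) (hε : 0 < ε) (n : ℕ) (hn : icov dA A ε = (n : ℕ∞)) :
    ∀ δ : ℝ, 0 < δ →
      dcov dB Set.univ (ε + δ) ≤ ((⌈ε * n / δ⌉₊ : ℕ∞)) ^ n := by
  intro δ hδ
  obtain ⟨F, hFA, hFcov, rfl⟩ := exists_finset_card_eq_of_icov_eq hn
  have hbal : Balanced ℝ A := balanced_iff_smul_mem.2 fun t ht a ha => by
    simpa using habsconv a ha a ha t 0 (by simpa using ht)
  have hlip : ∀ a ∈ A, ∀ a' ∈ A, ∀ b, |h a b - h a' b| ≤ p (a - a') := fun a ha a' ha' b => by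
    rw [← hdp a ha a' ha', hdA a ha a' ha']
    exact abs_sub_le_iSup_abs_sub (hrow a ha) (hrow a' ha') b
  have hpF : ∀ a ∈ A, ∃ y ∈ F, p (a - y) ≤ ε := fun a ha => by
    obtain ⟨y, hy, hay⟩ := hFcov a ha
    exact ⟨y, hy, hdp a ha y (hFA hy) ▸ hay⟩
  have hbound : ∀ (y : F) b, |h y b| ≤ ε * F.card := fun y b => by
    have hy := hFA y.2
    calc |h y b| = |h y b - h 0 b| := by rw [h0, sub_zero]
      _ ≤ p y := by simpa using hlip y hy 0 (hbal.zero_mem ⟨_, hy⟩) b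
      _ ≤ ε * F.card := p.le_mul_card_of_forall_exists_sub_le hbal hpF hy
  have hdiam : ∀ b₁ b₂, (∀ y : F, |h y b₁ - h y b₂| ≤ 2 * δ) → dB b₁ b₂ ≤ 2 * (ε + δ) :=
    fun b₁ b₂ hb => by
      rw [hdB, mul_add]
      refine iSup_abs_sub_le_of_forall_exists (F := F) h hε.le (by positivity) (fun a ha => ?_)
        fun y hy => hb ⟨y, hy⟩
      obtain ⟨y, hy, hay⟩ := hpF a ha
      exact ⟨y, hy, fun b => (hlip a ha y (hFA hy) b).trans hay⟩
  rcases F.card.eq_zero_or_pos with hn0 | hn0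
  · simpa [hn0] using dcov_univ_le_pow dB (fun y : F => h y) hδ one_pos
      (fun y b => (hbound y b).trans (by simp [hn0]; positivity)) hdiam
  · have hεδ : ε * F.card ≤ δ * ⌈ε * F.card / δ⌉₊ := (div_le_iff₀' hδ).1 (Nat.le_ceil _)
    simpa using dcov_univ_le_pow dB (fun y : F => h y) hδ (Nat.ceil_pos.2 (by positivity))
      (fun y b => (hbound y b).trans hεδ) hdiam

/-- Let `V` be a real vector space, `p` a seminorm on `V`, and `A ⊆ V`
a nonempty absolutely convex subset.  Let `h : A × B → ℝ` be bounded in each variable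
separately, with `h(0,b) = 0` for all `b`, and suppose the semimetric
`d_A(a,a') := sup_{b∈B} |h(a,b) − h(a',b)|` satisfies `d_A(a,a') = p(a − a')` on `A`;
let `d_B(b₁,b₂) := sup_{a∈A} |h(a,b₁) − h(a,b₂)|`.  If `N_A(ε) = n` is finite for some
`ε > 0`, then for every `δ > 0`, `N_B^Δ(ε + δ) ≤ (⌈ε·N_A(ε)/δ⌉)^(N_A(ε))`. -/
theorem statement10 {V : Type*} [AddCommGroup V] [Module ℝ V]
    (p : Seminorm ℝ V) (A : Set V) (hAne : A.Nonempty)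
    (habsconv : ∀ a ∈ A, ∀ a' ∈ A, ∀ lam mu : ℝ, |lam| + |mu| ≤ 1 →
      lam • a + mu • a' ∈ A)
    {B : Type*} (h : V → B → ℝ)
    (h0 : ∀ b : B, h 0 b = 0)
    (hcol : ∀ b : B, ∃ M : ℝ, ∀ a ∈ A, |h a b| ≤ M)
    (hrow : ∀ a ∈ A, ∃ M : ℝ, ∀ b : B, |h a b| ≤ M)
    (dA : V → V → ℝ)
    (hdA : ∀ a ∈ A, ∀ a' ∈ A, dA a a' = ⨆ b : B, |h a b - h a' b|)
    (hdp : ∀ a ∈ A, ∀ a' ∈ A, dA a a' = p (a - a'))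
    (dB : B → B → ℝ)
    (hdB : ∀ b₁ b₂ : B, dB b₁ b₂ = ⨆ a : A, |h (a : V) b₁ - h (a : V) b₂|)
    (ε : ℝ) (hε : 0 < ε) (n : ℕ) (hn : icov dA A ε = (n : ℕ∞)) :
    ∀ δ : ℝ, 0 < δ →
      dcov dB Set.univ (ε + δ) ≤ ((⌈ε * n / δ⌉₊ : ℕ∞)) ^ n :=
  statement10_general p A habsconv h h0 hrow dA hdA hdp dB hdB ε hε n hn
end
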